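/- arXiv:2506.13975 — 2 statements merged into one kernel-verified Lean document; each statement's English description precedes it below -/
import Mathlib

section
/- Let r ≥ 1, n ≥ 3, and let m_1, ..., m_{r+1} be nonnegative integers with ∑_{j=1}^{r+1} m_j = r(n-1). Then the coefficient of ∏_{j=1}^{r+1} ∏_{v=1}^{m_j} H_{j,v} in ∑_{k_1 + ⋯ + k_{r+1} = r(n-1)} ∏_{j=1}^{r+1} H_j^{k_j}, where H_j = ∑_{v=1}^{m_j} μ_{j,v} H_{j,v} and H_{j,v}^2 = 0, equals ∏_{j=1}^{r+1} m_j! · ∏_{j=1}^{r+1} ∏_{v=1}^{m_j} μ_{j,v}. In particular logTev^{P^r}_Γ = ∏ m_j! ∏ μ_{j,v}. -/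
lemma aux_sum_single_apply {α β : Type*} [DecidableEq α] (s : Finset β) (f : β → α) (y : α) :
    (∑ x ∈ s, Finsupp.single (f x) (1 : ℕ)) y = (s.filter fun x => f x = y).card := by
  rw [Finset.sum_apply', Finset.card_filter]
  exact Finset.sum_congr rfl fun x _ => by rw [Finsupp.single_apply]

lemma aux_prod_C_mul_X {σ R β : Type*} [CommSemiring R] (s : Finset β) (c : β → R) (f : β → σ) :
    ∏ x ∈ s, (MvPolynomial.C (c x) * MvPolynomial.X (f x)) =
      MvPolynomial.monomial (∑ x ∈ s, Finsupp.single (f x) 1) (∏ x ∈ s, c x) := by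
  induction s using Finset.cons_induction with
  | empty => simp
  | cons a s ha ih =>
      rw [Finset.prod_cons, ih, Finset.sum_cons, Finset.prod_cons,
        show (MvPolynomial.C (c a) * MvPolynomial.X (f a) : MvPolynomial σ R)
          = MvPolynomial.monomial (Finsupp.single (f a) 1) (c a) by
            rw [← MvPolynomial.C_mul_X_pow_eq_monomial, pow_one],
        MvPolynomial.monomial_mul]

lemma aux_fiber_card_sum {a b : ℕ} (p : Fin a → Fin b) :
    ∑ v : Fin b, (Finset.univ.filter fun i => p i = v).card = a := by
  rw [← Finset.card_eq_sum_card_fiberwise (fun x _ => Finset.mem_univ (p x)), Finset.card_univ,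
    Fintype.card_fin]

lemma aux_fiber_one_iff {b : ℕ} (p : Fin b → Fin b) :
    (∀ v, (Finset.univ.filter fun i => p i = v).card = 1) ↔ Function.Bijective p := by
  constructor
  · intro h
    constructor
    · intro i i' hii'
      have h1 := h (p i')
      rw [Finset.card_eq_one] at h1
      obtain ⟨x, hx⟩ := h1
      have hi : i ∈ Finset.univ.filter fun j => p j = p i' := by simp [hii']
      have hi' : i' ∈ Finset.univ.filter fun j => p j = p i' := by simp
      rw [hx, Finset.mem_singleton] at hi hi'
      rw [hi, hi']
    · intro v
      have h1 := h v
      have : (Finset.univ.filter fun i => p i = v).Nonempty := by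
        rw [← Finset.card_pos, h1]; norm_num
      obtain ⟨i, hi⟩ := this
      exact ⟨i, (Finset.mem_filter.mp hi).2⟩
  · intro hp v
    obtain ⟨i, hi⟩ := hp.surjective v
    rw [Finset.card_eq_one]
    exact ⟨i, by ext j; simp [hp.injective.eq_iff' hi]⟩

lemma aux_card_bijective (b : ℕ) :
    (Finset.univ.filter fun p : Fin b → Fin b => Function.Bijective p).card = b.factorial := by
  rw [← Fintype.card_subtype]
  rw [Fintype.card_congr
    (⟨fun f => Equiv.ofBijective f.1 f.2, fun σ => ⟨σ, σ.bijective⟩,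
      fun f => Subtype.ext rfl, fun σ => Equiv.ext fun x => rfl⟩ :
      {p : Fin b → Fin b // Function.Bijective p} ≃ Equiv.Perm (Fin b))]
  rw [Fintype.card_perm, Fintype.card_fin]

lemma aux_block {b : ℕ} (μ : Fin b → ℕ) :
    ∑ p : Fin b → Fin b, (if Function.Bijective p then 1 else 0) * (∏ i, (μ (p i) : ℤ))
      = (b.factorial : ℤ) * ∏ v, (μ v : ℤ) := by
  simp only [ite_mul, one_mul, zero_mul]
  rw [← Finset.sum_filter]
  rw [Finset.sum_congr rfl (fun p hp => ?_), Finset.sum_const, aux_card_bijective, nsmul_eq_mul]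
  exact Fintype.prod_bijective p (Finset.mem_filter.mp hp).2 _ _ (fun _ => rfl)

lemma aux_prod_ite_all {ι R : Type*} [Fintype ι] [CommMonoidWithZero R] [Nontrivial R]
    (Q : ι → Prop) [DecidablePred Q] [Decidable (∀ j, Q j)] :
    (if ∀ j, Q j then (1 : R) else 0) = ∏ j, if Q j then (1 : R) else 0 := by
  by_cases h : ∀ j, Q j
  · simp [h, Finset.prod_congr rfl fun j _ => if_pos (h j)]
  · push_neg at h
    obtain ⟨j, hj⟩ := h
    rw [if_neg (by push_neg; exact ⟨j, hj⟩)]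
    exact (Finset.prod_eq_zero (Finset.mem_univ j)
      (if_neg hj : (if Q j then (1:R) else 0) = 0)).symm

/-- With `∑_{j=1}^{r+1} m_j = r(n-1)`, the coefficient of
`∏_{j,v} H_{j,v}` in `∑_{k_1+⋯+k_{r+1}=r(n-1)} ∏_j H_j^{k_j}`, where
`H_j = ∑_v μ_{j,v} H_{j,v}` and `H_{j,v}^2 = 0`, equals
`∏ m_j! · ∏ μ_{j,v}`; this is `logTev^{P^r}_Γ`. -/
theorem stmt11 (r n : ℕ) (hr : 1 ≤ r) (hn : 3 ≤ n)
    (m : Fin (r + 1) → ℕ) (hm : ∑ j, m j = r * (n - 1))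
    (μ : (j : Fin (r + 1)) → Fin (m j) → ℕ) (hμ : ∀ j v, 0 < μ j v) :
    MvPolynomial.coeff
      (∑ j : Fin (r + 1), ∑ v : Fin (m j),
        Finsupp.single (⟨j, v⟩ : Σ j : Fin (r + 1), Fin (m j)) 1)
      (∑ k ∈ Finset.Nat.antidiagonalTuple (r + 1) (r * (n - 1)),
        ∏ j : Fin (r + 1),
          (∑ v : Fin (m j), MvPolynomial.C (μ j v : ℤ) *
            MvPolynomial.X (⟨j, v⟩ : Σ j : Fin (r + 1), Fin (m j))) ^ k j)
    = (∏ j : Fin (r + 1), ((m j).factorial : ℤ)) *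
        ∏ j : Fin (r + 1), ∏ v : Fin (m j), (μ j v : ℤ) := by
  classical
  set S := Σ j : Fin (r + 1), Fin (m j) with hS
  set d : S →₀ ℕ := ∑ j : Fin (r + 1), ∑ v : Fin (m j),
    Finsupp.single (⟨j, v⟩ : S) 1 with hd
  -- `d` takes value 1 everywhere
  have hd1 : ∀ y : S, d y = 1 := by
    intro y
    rw [hd, Finset.sum_sigma' Finset.univ (fun _ => Finset.univ)
      (fun j v => Finsupp.single (⟨j, v⟩ : S) (1:ℕ))]
    have he : ∀ x : S, (⟨x.1, x.2⟩ : S) = x := fun x => rfl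
    rw [Finset.sum_congr rfl fun x _ => by rw [he x]]
    rw [aux_sum_single_apply _ (fun x => x) y, Finset.filter_eq']
    simp
  -- the exponent finsupp of a summand
  have hEapp : ∀ (k : Fin (r+1) → ℕ) (P : ∀ j, Fin (k j) → Fin (m j)) (j0 : Fin (r+1))
      (v0 : Fin (m j0)),
      (∑ j, ∑ i : Fin (k j), Finsupp.single (⟨j, P j i⟩ : S) (1:ℕ)) ⟨j0, v0⟩
        = (Finset.univ.filter fun i => P j0 i = v0).card := by
    intro k P j0 v0
    rw [Finset.sum_apply']
    rw [Finset.sum_eq_single j0 (fun j _ hj => ?_) (fun h => absurd (Finset.mem_univ j0) h)]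
    · rw [Finset.sum_apply', Finset.card_filter]
      refine Finset.sum_congr rfl fun i _ => ?_
      simp [Finsupp.single_apply]
    · rw [Finset.sum_apply']
      apply Finset.sum_eq_zero
      intro i _
      rw [Finsupp.single_apply, if_neg]
      simp [hj]
  -- if the exponent matches `d` then `k = m`
  have hkm : ∀ (k : Fin (r+1) → ℕ) (P : ∀ j, Fin (k j) → Fin (m j)),
      (∑ j, ∑ i : Fin (k j), Finsupp.single (⟨j, P j i⟩ : S) (1:ℕ)) = d →
      ∀ j, k j = m j := by
    intro k P h j
    have : ∑ v : Fin (m j), (Finset.univ.filter fun i => P j i = v).card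
        = ∑ v : Fin (m j), 1 := by
      refine Finset.sum_congr rfl fun v _ => ?_
      rw [← hEapp k P j v, h, hd1]
    rw [aux_fiber_card_sum] at this
    simpa using this
  -- compute the coefficient of each summand
  have hcoeff : ∀ k : Fin (r+1) → ℕ,
      MvPolynomial.coeff d (∏ j : Fin (r + 1),
          (∑ v : Fin (m j), MvPolynomial.C (μ j v : ℤ) * MvPolynomial.X (⟨j, v⟩ : S)) ^ k j)
      = ∑ P ∈ Fintype.piFinset (fun j => (Finset.univ : Finset (Fin (k j) → Fin (m j)))),
          if (∑ j, ∑ i : Fin (k j), Finsupp.single (⟨j, P j i⟩ : S) (1:ℕ)) = d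
          then (∏ j, ∏ i : Fin (k j), (μ j (P j i) : ℤ)) else 0 := by
    intro k
    rw [Finset.prod_congr rfl fun j _ => by
      rw [Fintype.sum_pow (fun v => MvPolynomial.C (μ j v : ℤ) * MvPolynomial.X (⟨j, v⟩ : S))
        (k j)]]
    rw [Finset.prod_univ_sum]
    rw [MvPolynomial.coeff_sum]
    refine Finset.sum_congr rfl fun P _ => ?_
    rw [Finset.prod_sigma' Finset.univ (fun j => Finset.univ)
      (fun j i => MvPolynomial.C (μ j (P j i) : ℤ) * MvPolynomial.X (⟨j, P j i⟩ : S))]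
    rw [aux_prod_C_mul_X]
    rw [MvPolynomial.coeff_monomial]
    rw [← Finset.sum_sigma' Finset.univ (fun j => Finset.univ)
      (fun j i => Finsupp.single (⟨j, P j i⟩ : S) (1:ℕ))]
    rw [← Finset.prod_sigma' Finset.univ (fun j => Finset.univ)
      (fun j i => (μ j (P j i) : ℤ))]
  -- only `k = m` contributes
  have hmem : m ∈ Finset.Nat.antidiagonalTuple (r + 1) (r * (n - 1)) :=
    Finset.Nat.mem_antidiagonalTuple.mpr hm
  rw [MvPolynomial.coeff_sum]
  rw [Finset.sum_eq_single_of_mem m hmem (fun k _ hk => ?_)]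
  · -- the `k = m` term
    rw [hcoeff m]
    have hiff : ∀ P : ∀ j, Fin (m j) → Fin (m j),
        ((∑ j, ∑ i : Fin (m j), Finsupp.single (⟨j, P j i⟩ : S) (1:ℕ)) = d
          ↔ ∀ j, Function.Bijective (P j)) := by
      intro P
      constructor
      · intro h j
        rw [← aux_fiber_one_iff]
        intro v
        rw [← hEapp m P j v, h, hd1]
      · intro h
        ext y
        obtain ⟨j, v⟩ := y
        rw [hEapp m P j v, hd1]
        exact (aux_fiber_one_iff (P j)).mpr (h j) v
    rw [Finset.sum_congr rfl fun P _ => by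
      rw [if_congr (hiff P) rfl rfl,
        show (if ∀ j, Function.Bijective (P j)
            then (∏ j, ∏ i : Fin (m j), (μ j (P j i) : ℤ)) else 0)
          = (if ∀ j, Function.Bijective (P j) then (1:ℤ) else 0)
            * ∏ j, ∏ i : Fin (m j), (μ j (P j i) : ℤ) by
          by_cases h : ∀ j, Function.Bijective (P j) <;> simp [h],
        aux_prod_ite_all (fun j => Function.Bijective (P j)),
        ← Finset.prod_mul_distrib]]
    rw [← Finset.prod_univ_sum (fun j => (Finset.univ : Finset (Fin (m j) → Fin (m j))))
      (fun j p => (if Function.Bijective p then (1:ℤ) else 0) * ∏ i, (μ j (p i) : ℤ))]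
    rw [Finset.prod_congr rfl fun j _ => aux_block (μ j)]
    rw [Finset.prod_mul_distrib]
  · -- terms with `k ≠ m` vanish
    rw [hcoeff k]
    refine Finset.sum_eq_zero fun P _ => ?_
    rw [if_neg]
    intro h
    exact hk (funext (hkm k P h))
end

section
/- In the truncated polynomial ring R = Z[ζ, H_0, ..., H_{r+s+1}] with relations H_j^{m_j+1} = 0, suppose a class is given by ∑_{k_0+k_{r+2}+⋯+k_{r+s+1}=s(n-1)} ∑_{ℓ=0}^{k_0} C(k_0,ℓ) a^{k_0-ℓ} S_{r(n-1)+k_0-ℓ} H_0^ℓ H_{r+2}^{k_{r+2}} ⋯ H_{r+s+1}^{k_{r+s+1}}, where S_t = ∑_{k_1+⋯+k_{r+1}=t} H_1^{k_1}⋯H_{r+1}^{k_{r+1}}. Then the coefficient of H_0^{m_0} H_1^{m_1} ⋯ H_{r+s+1}^{m_{r+s+1}} equals a^{k_0-m_0} C(k_0, m_0) if k_0 := s(n-1) - ∑_{j=r+2}^{r+s+1} m_j satisfies k_0 ≥ m_0, and equals 0 otherwise, assuming ∑_{j=0}^{r+s+1} m_j = (r+s)(n-1). -/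
noncomputable def shape (r s u : ℕ) (v : Fin (r+1) → ℕ) (w : Fin s → ℕ) : ℕ →₀ ℕ :=
  (∑ i : Fin (r+1), Finsupp.single (1+(i:ℕ)) (v i)) + Finsupp.single 0 u
    + ∑ i : Fin s, Finsupp.single (r+2+(i:ℕ)) (w i)

lemma shape_apply (r s u : ℕ) (v : Fin (r+1) → ℕ) (w : Fin s → ℕ) (j : ℕ) :
    shape r s u v w j =
    (∑ i : Fin (r+1), if j = 1+(i:ℕ) then v i else 0) + (if j = 0 then u else 0)
      + ∑ i : Fin s, if j = r+2+(i:ℕ) then w i else 0 := by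
  simp [shape, Finsupp.single_apply, Finsupp.finset_sum_apply, eq_comm]

lemma shape_apply_zero (r s u : ℕ) (v : Fin (r+1) → ℕ) (w : Fin s → ℕ) :
    shape r s u v w 0 = u := by
  rw [shape_apply]
  rw [Finset.sum_eq_zero (fun i _ => by rw [if_neg]; omega),
    Finset.sum_eq_zero (fun i _ => by rw [if_neg]; omega)]
  simp

lemma shape_apply_one (r s u : ℕ) (v : Fin (r+1) → ℕ) (w : Fin s → ℕ) (t : Fin (r+1)) :
    shape r s u v w (1+(t:ℕ)) = v t := by
  rw [shape_apply]
  rw [Finset.sum_eq_single t (fun i _ hi => by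
      rw [if_neg]; intro h; exact hi (Fin.ext (by omega))) (by simp)]
  rw [Finset.sum_eq_zero (fun i _ => by rw [if_neg]; omega)]
  simp

lemma shape_apply_two (r s u : ℕ) (v : Fin (r+1) → ℕ) (w : Fin s → ℕ) (t : Fin s) :
    shape r s u v w (r+2+(t:ℕ)) = w t := by
  rw [shape_apply]
  rw [Finset.sum_eq_single t (fun i _ hi => by
      rw [if_neg]; intro h; exact hi (Fin.ext (by omega))) (by simp)]
  rw [Finset.sum_eq_zero (fun i _ => by rw [if_neg]; have := i.2; omega)]
  have : ¬ (r+2+(t:ℕ) = 0) := by omega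
  simp [this]

lemma shape_eq_iff (r s u u' : ℕ) (v v' : Fin (r+1) → ℕ) (w w' : Fin s → ℕ) :
    shape r s u v w = shape r s u' v' w' ↔ u = u' ∧ v = v' ∧ w = w' := by
  constructor
  · intro h
    refine ⟨?_, funext fun t => ?_, funext fun t => ?_⟩
    · rw [← shape_apply_zero r s u v w, h, shape_apply_zero]
    · rw [← shape_apply_one r s u v w t, h, shape_apply_one]
    · rw [← shape_apply_two r s u v w t, h, shape_apply_two]
  · rintro ⟨rfl, rfl, rfl⟩; rfl

lemma term_eq_monomial (r s ℓ : ℕ) (K : ℤ) (d : Fin (r+1) → ℕ) (c : Fin s → ℕ) :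
    MvPolynomial.C K * (∏ i : Fin (r+1), MvPolynomial.X (1+(i:ℕ)) ^ d i) *
      MvPolynomial.X 0 ^ ℓ *
      (∏ i : Fin s, (MvPolynomial.X (r+2+(i:ℕ)) : MvPolynomial ℕ ℤ) ^ c i)
    = MvPolynomial.monomial (shape r s ℓ d c) K := by
  simp only [MvPolynomial.X_pow_eq_monomial, ← MvPolynomial.monomial_sum_one,
    MvPolynomial.C_apply, MvPolynomial.monomial_mul]
  rw [MvPolynomial.monomial_eq_monomial_iff]
  left
  refine ⟨?_, by ring⟩
  simp only [shape]; abel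

lemma range_split {M : Type*} [AddCommMonoid M] (r s : ℕ) (f : ℕ → M) :
    ∑ j ∈ Finset.range (r + s + 2), f j
      = f 0 + (∑ i : Fin (r+1), f (1+(i:ℕ))) + ∑ i : Fin s, f (r+2+(i:ℕ)) := by
  have h1 : ∑ j ∈ Finset.Ico 1 (r+2), f j = ∑ i : Fin (r+1), f (1+(i:ℕ)) := by
    rw [Finset.sum_Ico_eq_sum_range, Fin.sum_univ_eq_sum_range (fun i => f (1+i))]
    congr 1
  have h2 : ∑ j ∈ Finset.Ico (r+2) (r+s+2), f j = ∑ i : Fin s, f (r+2+(i:ℕ)) := by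
    rw [Finset.sum_Ico_eq_sum_range, Fin.sum_univ_eq_sum_range (fun i => f (r+2+i))]
    have h : r+s+2-(r+2) = s := by omega
    rw [h]
  rw [← h1, ← h2, Finset.range_eq_Ico,
    ← Finset.sum_Ico_consecutive f (by omega : 0 ≤ r+2) (by omega : r+2 ≤ r+s+2),
    ← Finset.sum_Ico_consecutive f (by omega : 0 ≤ 1) (by omega : 1 ≤ r+2)]
  simp [add_assoc]

lemma M_eq_shape (r s : ℕ) (m : ℕ → ℕ) :
    ∑ j ∈ Finset.range (r + s + 2), Finsupp.single j (m j)
      = shape r s (m 0) (fun i => m (1+(i:ℕ))) (fun i => m (r+2+(i:ℕ))) := by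
  rw [range_split r s (fun j => Finsupp.single j (m j))]
  simp only [shape]
  abel

/-- In `ℤ[ζ, H_0, ..., H_{r+s+1}]` (the relations `H_j^{m_j+1} = 0`
do not affect extraction of the coefficient of the monomial
`H_0^{m_0} ⋯ H_{r+s+1}^{m_{r+s+1}}`), the coefficient of that monomial in
`∑_{k_0+k_{r+2}+⋯+k_{r+s+1}=s(n-1)} ∑_{ℓ=0}^{k_0} C(k_0,ℓ) a^{k_0-ℓ}
S_{r(n-1)+k_0-ℓ} H_0^ℓ H_{r+2}^{k_{r+2}} ⋯ H_{r+s+1}^{k_{r+s+1}}`, where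
`S_t = ∑_{k_1+⋯+k_{r+1}=t} H_1^{k_1}⋯H_{r+1}^{k_{r+1}}`, equals
`a^{k_0-m_0} C(k_0,m_0)` if `k_0 := s(n-1) - ∑_{j≥r+2} m_j ≥ m_0`, and `0`
otherwise, assuming `∑ m_j = (r+s)(n-1)`. -/
theorem stmt17 (r s a n : ℕ) (hr : 1 ≤ r) (hs : 1 ≤ s) (hn : 3 ≤ n)
    (m : ℕ → ℕ)
    (hm : ∑ j ∈ Finset.range (r + s + 2), m j = (r + s) * (n - 1))
    (k0 : ℕ)
    (hk0 : k0 + ∑ j ∈ Finset.Ico (r + 2) (r + s + 2), m j = s * (n - 1)) :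
    MvPolynomial.coeff
      (∑ j ∈ Finset.range (r + s + 2), Finsupp.single j (m j))
      (∑ c ∈ Finset.Nat.antidiagonalTuple (s + 1) (s * (n - 1)),
        ∑ ℓ ∈ Finset.range (c 0 + 1),
          MvPolynomial.C (((c 0).choose ℓ : ℤ) * (a : ℤ) ^ (c 0 - ℓ)) *
          (∑ d ∈ Finset.Nat.antidiagonalTuple (r + 1) (r * (n - 1) + c 0 - ℓ),
            ∏ i : Fin (r + 1), MvPolynomial.X (1 + (i : ℕ)) ^ d i) *
          MvPolynomial.X 0 ^ ℓ *
          ∏ i : Fin s, (MvPolynomial.X (r + 2 + (i : ℕ)) : MvPolynomial ℕ ℤ) ^ c i.succ)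
    = if m 0 ≤ k0 then (a : ℤ) ^ (k0 - m 0) * (k0.choose (m 0) : ℤ) else 0 := by
  classical
  set v : Fin (r+1) → ℕ := fun i => m (1+(i:ℕ)) with hv
  set w : Fin s → ℕ := fun i => m (r+2+(i:ℕ)) with hw
  obtain ⟨A, hA⟩ : ∃ A, ∑ i : Fin (r+1), v i = A := ⟨_, rfl⟩
  obtain ⟨B, hB⟩ : ∃ B, ∑ i : Fin s, w i = B := ⟨_, rfl⟩
  -- arithmetic facts
  have hIco2 : ∑ j ∈ Finset.Ico (r+2) (r+s+2), m j = B := by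
    rw [← hB, hw, Finset.sum_Ico_eq_sum_range, Fin.sum_univ_eq_sum_range (fun i => m (r+2+i))]
    have h : r+s+2-(r+2) = s := by omega
    rw [h]
  have key1 : k0 + B = s * (n - 1) := by rw [← hIco2]; exact hk0
  have key2 : m 0 + A + B = (r + s) * (n - 1) := by
    rw [← hm, range_split r s m, ← hA, ← hB]
  have key3 : (r + s) * (n - 1) = r * (n - 1) + s * (n - 1) := add_mul _ _ _
  have keyA : m 0 + A = r * (n - 1) + k0 := by omega
  -- rewrite the big sum
  rw [M_eq_shape, MvPolynomial.coeff_sum]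
  have hstep : ∀ c ∈ Finset.Nat.antidiagonalTuple (s + 1) (s * (n - 1)),
      MvPolynomial.coeff (shape r s (m 0) v w)
        (∑ ℓ ∈ Finset.range (c 0 + 1),
          MvPolynomial.C (((c 0).choose ℓ : ℤ) * (a : ℤ) ^ (c 0 - ℓ)) *
          (∑ d ∈ Finset.Nat.antidiagonalTuple (r + 1) (r * (n - 1) + c 0 - ℓ),
            ∏ i : Fin (r + 1), MvPolynomial.X (1 + (i : ℕ)) ^ d i) *
          MvPolynomial.X 0 ^ ℓ *
          ∏ i : Fin s, (MvPolynomial.X (r + 2 + (i : ℕ)) : MvPolynomial ℕ ℤ) ^ c i.succ)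
      = ∑ ℓ ∈ Finset.range (c 0 + 1),
          ∑ d ∈ Finset.Nat.antidiagonalTuple (r + 1) (r * (n - 1) + c 0 - ℓ),
            if shape r s ℓ d (fun i => c i.succ) = shape r s (m 0) v w
            then ((c 0).choose ℓ : ℤ) * (a : ℤ) ^ (c 0 - ℓ) else 0 := by
    intro c _
    rw [MvPolynomial.coeff_sum]
    refine Finset.sum_congr rfl fun ℓ _ => ?_
    rw [Finset.mul_sum, Finset.sum_mul, Finset.sum_mul, MvPolynomial.coeff_sum]
    refine Finset.sum_congr rfl fun d _ => ?_
    rw [term_eq_monomial, MvPolynomial.coeff_monomial]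
  rw [Finset.sum_congr rfl hstep]
  -- the unique contributing c
  set cstar : Fin (s+1) → ℕ := Fin.cons k0 w with hcstar
  have hmem : cstar ∈ Finset.Nat.antidiagonalTuple (s + 1) (s * (n - 1)) := by
    rw [Finset.Nat.mem_antidiagonalTuple, hcstar, Fin.sum_univ_succ]
    simpa [hB] using key1
  rw [Finset.sum_eq_single cstar (fun c hc hne => ?_) (fun h => absurd hmem h)]
  · -- evaluate at cstar
    have hc0 : cstar 0 = k0 := rfl
    have hcs : (fun i => cstar i.succ) = w := by funext i; simp [hcstar]
    simp only [hc0, hcs]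
    by_cases hle : m 0 ≤ k0
    · rw [if_pos hle]
      rw [Finset.sum_eq_single (m 0) (fun ℓ _ hne => ?_) (fun h => absurd (by
          rw [Finset.mem_range]; omega) h)]
      · rw [Finset.sum_eq_single v (fun d _ hne => ?_) (fun h => absurd (by
            rw [Finset.Nat.mem_antidiagonalTuple, hA]; omega) h)]
        · rw [if_pos (by rw [shape_eq_iff]; exact ⟨rfl, rfl, rfl⟩), mul_comm]
        · rw [if_neg]
          rw [shape_eq_iff]
          rintro ⟨-, rfl, -⟩
          exact hne rfl
      · refine Finset.sum_eq_zero fun d _ => ?_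
        rw [if_neg]
        rw [shape_eq_iff]
        rintro ⟨rfl, -, -⟩
        exact hne rfl
    · rw [if_neg hle]
      refine Finset.sum_eq_zero fun ℓ hℓ => Finset.sum_eq_zero fun d _ => ?_
      rw [if_neg]
      rw [shape_eq_iff]
      rintro ⟨rfl, -, -⟩
      rw [Finset.mem_range] at hℓ
      omega
  · -- other c contribute 0
    refine Finset.sum_eq_zero fun ℓ _ => Finset.sum_eq_zero fun d _ => ?_
    rw [if_neg]
    rw [shape_eq_iff]
    rintro ⟨-, -, hcw⟩
    apply hne
    have hc0 : c 0 = k0 := by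
      rw [Finset.Nat.mem_antidiagonalTuple, Fin.sum_univ_succ] at hc
      have : ∑ i : Fin s, c i.succ = B := by
        have h2 := congrArg (fun g : Fin s → ℕ => ∑ i, g i) hcw
        simpa [hB] using h2
      omega
    funext i
    refine Fin.cases ?_ (fun j => ?_) i
    · simpa [hcstar] using hc0
    · simpa [hcstar] using congrFun hcw j
end
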